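/- arXiv:1206.6006 — 2 statements merged into one kernel-verified Lean document; each statement's English description precedes it below -/
import Mathlib

section
/- (Bound B) Let q be a prime power and let k, d, r, n be integers with d ≥ 2, k ≥ 1, 0 ≤ r ≤ min{⌊(d−1)/2⌋, k}, and suppose there exists an (n,k,q) systematic code C whose minimum distance is at least d. Then |B(r,k)| ≤ A_q(n−k, d−2r) − |B(r,n−k)|/|B(d−2r−1,n−k)| + 1, an inequality of rational numbers. -/
/-!
Restrict the systematic encoder to the messages of weight at most `r`. Two such messages differ
in at most `2r` positions, so their check parts form a code `T` of size `|B(r,k)|` and minimum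
distance at least `d - 2r` in `F_q^(n-k)`, and every other word of `T` is at distance at least
`d - r` from the check part `c₀` of the zero message. Replace `c₀` by a maximal
`(d - 2r)`-separated subset `D` of the radius-`r` ball around `c₀`: by maximality the balls of
radius `d - 2r - 1` around `D` cover that ball, so `|D| ≥ |B(r,n-k)| / |B(d-2r-1,n-k)|`, and by
the triangle inequality `(T \ {c₀}) ∪ D` still has minimum distance `d - 2r`. Hence
`|B(r,k)| - 1 + |D| ≤ A_q(n-k, d-2r)`.
-/

/-- `|B(l,m)| = ∑_{j=0}^{l} C(m,j)(q−1)^j`, the number of vectors of `F_q^m`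
of Hamming weight at most `l`. -/
def ballCard (q l m : ℕ) : ℕ := ∑ j ∈ Finset.range (l + 1), m.choose j * (q - 1) ^ j

/-- `A_q(n,d)`: the maximum cardinality of a (nonempty) code `C ⊆ F^n` in which any two
distinct words are at Hamming distance at least `d`. -/
noncomputable def maxCodeCard (F : Type) [Fintype F] [DecidableEq F] (n d : ℕ) : ℕ :=
  sSup {M | ∃ C : Finset (Fin n → F), C.Nonempty ∧ C.card = M ∧
    ∀ c ∈ C, ∀ c' ∈ C, c ≠ c' → d ≤ hammingDist c c'}

/-- `C` is an `(n,k,q)` systematic code: the image of an injective map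
`φ : F^k → F^n` which is the identity on the first `k` coordinates. -/
def IsSystematicCode {F : Type} [Fintype F] [DecidableEq F] {n : ℕ} (k : ℕ)
    (C : Finset (Fin n → F)) : Prop :=
  ∃ φ : (Fin k → F) → (Fin n → F), Function.Injective φ ∧
    (∀ v : Fin k → F, ∀ i : Fin n, ∀ h : (i : ℕ) < k, φ v i = v ⟨i, h⟩) ∧
    C = Finset.image φ Finset.univ

open Finset

section BallCard

variable {ι F : Type*} [Fintype ι] [DecidableEq ι] [Fintype F] [DecidableEq F]

lemma card_filter_support_eq [Zero F] (s : Finset ι) :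
    #{x : ι → F | ({i | x i ≠ 0} : Finset ι) = s} = (Fintype.card F - 1) ^ #s := by
  have hpi : ({x : ι → F | ({i | x i ≠ 0} : Finset ι) = s} : Finset (ι → F))
      = Fintype.piFinset fun i => if i ∈ s then {0}ᶜ else {0} := by
    ext x
    simp only [mem_filter, mem_univ, true_and, Fintype.mem_piFinset, Finset.ext_iff]
    refine forall_congr' fun i => ?_
    by_cases hi : i ∈ s <;> simp [hi]
  rw [hpi, Fintype.card_piFinset]
  simp [apply_ite Finset.card, card_compl, Finset.prod_ite_mem]

lemma card_filter_hammingNorm_eq [Zero F] (j : ℕ) :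
    #{x : ι → F | hammingNorm x = j} = (Fintype.card ι).choose j * (Fintype.card F - 1) ^ j := by
  rw [card_eq_sum_card_fiberwise (f := fun x : ι → F => ({i | x i ≠ 0} : Finset ι))
    (t := powersetCard j univ)]
  · rw [sum_congr rfl fun s hs => ?_, sum_const, card_powersetCard, card_univ, smul_eq_mul]
    rw [filter_filter, ← (mem_powersetCard.1 hs).2, ← card_filter_support_eq]
    congr 1
    ext x
    simp only [mem_filter, mem_univ, true_and, and_iff_right_iff_imp]
    rintro rfl
    rfl
  · intro x hx
    simpa [mem_powersetCard, hammingNorm] using hx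

lemma card_filter_hammingNorm_le [Zero F] (l : ℕ) :
    #{x : ι → F | hammingNorm x ≤ l} = ballCard (Fintype.card F) l (Fintype.card ι) := by
  rw [card_eq_sum_card_fiberwise (f := hammingNorm) (t := range (l + 1))]
  · refine sum_congr rfl fun j hj => ?_
    rw [filter_filter, ← card_filter_hammingNorm_eq]
    congr 1
    ext x
    simp only [mem_filter, mem_univ, true_and, and_iff_right_iff_imp]
    rintro rfl
    exact Nat.lt_succ_iff.1 (mem_range.1 hj)
  · intro x hx
    simpa [Nat.lt_succ_iff] using hx

lemma card_filter_hammingDist_le [AddGroup F] (c : ι → F) (l : ℕ) :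
    #{x : ι → F | hammingDist x c ≤ l} = ballCard (Fintype.card F) l (Fintype.card ι) := by
  rw [← card_filter_hammingNorm_le]
  refine card_equiv (Equiv.addLeft (-c)) fun y => ?_
  simp [hammingDist_comm _ c, hammingDist_eq_hammingNorm]

end BallCard

lemma exists_separated_subset_covering {ι β : Type*} [Fintype ι] [DecidableEq β]
    (S : Finset (ι → β)) {e : ℕ} (he : 0 < e) :
    ∃ D ⊆ S, (D : Set (ι → β)).Pairwise (fun x y => e ≤ hammingDist x y) ∧
      ∀ x ∈ S, ∃ y ∈ D, hammingDist x y < e := by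
  set separated := S.powerset.filter fun D : Finset (ι → β) =>
    (D : Set (ι → β)).Pairwise (fun x y => e ≤ hammingDist x y)
  obtain ⟨D, hD, hmax⟩ := exists_max_image separated card ⟨∅, by simp [separated]⟩
  rw [mem_filter, mem_powerset] at hD
  refine ⟨D, hD.1, hD.2, fun x hx => ?_⟩
  by_contra! hfar
  have hxD : x ∉ D := fun h => by simpa using (hfar x h).trans_lt' he
  have hins : insert x D ∈ separated := by
    rw [mem_filter, mem_powerset, coe_insert]
    exact ⟨insert_subset hx hD.1,
      hD.2.insert fun y hy _ => ⟨hfar y hy, hammingDist_comm y x ▸ hfar y hy⟩⟩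
  simpa [card_insert_of_notMem hxD] using hmax _ hins

lemma card_le_card_mul_ballCard {ι F : Type*} [Fintype ι] [DecidableEq ι] [Fintype F]
    [DecidableEq F] [AddGroup F]
    {S D : Finset (ι → F)} {l : ℕ} (hcover : ∀ x ∈ S, ∃ y ∈ D, hammingDist x y ≤ l) :
    #S ≤ #D * ballCard (Fintype.card F) l (Fintype.card ι) := by
  calc #S ≤ #(D.biUnion fun y => {x | hammingDist x y ≤ l}) :=
        card_le_card fun x hx => by simpa using hcover x hx
    _ ≤ ∑ y ∈ D, #{x : ι → F | hammingDist x y ≤ l} := card_biUnion_le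
    _ = #D * ballCard (Fintype.card F) l (Fintype.card ι) := by
        simp [card_filter_hammingDist_le]

lemma pairwise_erase_union {ι β : Type*} [Fintype ι] [DecidableEq β] {T D : Finset (ι → β)}
    {c : ι → β} {e r : ℕ}
    (hT : (T : Set (ι → β)).Pairwise (fun x y => e ≤ hammingDist x y))
    (hD : (D : Set (ι → β)).Pairwise (fun x y => e ≤ hammingDist x y))
    (hTc : ∀ x ∈ T, x ≠ c → e + r ≤ hammingDist x c) (hDc : ∀ y ∈ D, hammingDist y c ≤ r) :
    ((T.erase c ∪ D : Finset (ι → β)) : Set (ι → β)).Pairwise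
      (fun x y => e ≤ hammingDist x y) := by
  have hcross : ∀ x ∈ T.erase c, ∀ y ∈ D, e ≤ hammingDist x y := fun x hx y hy => by
    have := hammingDist_triangle x y c
    have := hTc x (mem_of_mem_erase hx) (ne_of_mem_erase hx)
    have := hDc y hy
    omega
  rw [coe_union, Set.pairwise_union]
  exact ⟨hT.mono (coe_subset.2 (erase_subset c T)), hD, fun x hx y hy _ =>
    ⟨hcross x hx y hy, hammingDist_comm x y ▸ hcross x hx y hy⟩⟩

lemma card_erase_union {ι β : Type*} [Fintype ι] [DecidableEq β] {T D : Finset (ι → β)}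
    {c : ι → β} {e r : ℕ} (he : 0 < e) (hcT : c ∈ T)
    (hTc : ∀ x ∈ T, x ≠ c → e + r ≤ hammingDist x c) (hDc : ∀ y ∈ D, hammingDist y c ≤ r) :
    #(T.erase c ∪ D) = #T - 1 + #D := by
  rw [card_union_of_disjoint, card_erase_of_mem hcT]
  refine disjoint_left.2 fun x hx hxD => ?_
  have := hTc x (mem_of_mem_erase hx) (ne_of_mem_erase hx)
  have := hDc x hxD
  omega

lemma card_le_maxCodeCard {F : Type} [Fintype F] [DecidableEq F] {n d : ℕ}
    {C : Finset (Fin n → F)} (hC : C.Nonempty)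
    (hsep : (C : Set (Fin n → F)).Pairwise (fun x y => d ≤ hammingDist x y)) :
    #C ≤ maxCodeCard F n d :=
  le_csSup ⟨Fintype.card (Fin n → F), by rintro _ ⟨C', -, rfl, -⟩; exact card_le_univ C'⟩
    ⟨C, hC, rfl, fun _ hc _ hc' => hsep hc hc'⟩

lemma hammingDist_le_add_of_cover {ι κ₁ κ₂ β : Type*} [Fintype ι] [Fintype κ₁] [Fintype κ₂]
    [DecidableEq ι] [DecidableEq β] {g₁ : κ₁ → ι} {g₂ : κ₂ → ι}
    (hg : ∀ i, (∃ j, g₁ j = i) ∨ ∃ j, g₂ j = i) (x y : ι → β) :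
    hammingDist x y ≤ hammingDist (x ∘ g₁) (y ∘ g₁) + hammingDist (x ∘ g₂) (y ∘ g₂) := by
  calc hammingDist x y
      ≤ #(({j | x (g₁ j) ≠ y (g₁ j)} : Finset κ₁).image g₁ ∪
          ({j | x (g₂ j) ≠ y (g₂ j)} : Finset κ₂).image g₂) := by
        refine card_le_card fun i hi => ?_
        rw [mem_filter] at hi
        rw [mem_union, mem_image, mem_image]
        rcases hg i with ⟨j, rfl⟩ | ⟨j, rfl⟩
        exacts [Or.inl ⟨j, by simpa using hi.2, rfl⟩, Or.inr ⟨j, by simpa using hi.2, rfl⟩]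
    _ ≤ _ := (card_union_le _ _).trans (add_le_add card_image_le card_image_le)

lemma hammingDist_le_add_castAdd_natAdd {β : Type*} [DecidableEq β] {k m : ℕ}
    (x y : Fin (k + m) → β) :
    hammingDist x y ≤ hammingDist (x ∘ Fin.castAdd m) (y ∘ Fin.castAdd m)
      + hammingDist (x ∘ Fin.natAdd k) (y ∘ Fin.natAdd k) :=
  hammingDist_le_add_of_cover
    (fun i => Fin.addCases (fun j => Or.inl ⟨j, rfl⟩) (fun j => Or.inr ⟨j, rfl⟩) i) x y

lemma le_hammingDist_of_hammingNorm_le {ι κ β γ : Type*} [Fintype ι] [Fintype κ] [DecidableEq β]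
    [Zero β] [DecidableEq γ] {t : (ι → β) → (κ → γ)} {d r : ℕ}
    (ht : ∀ v w, v ≠ w → d ≤ hammingDist v w + hammingDist (t v) (t w))
    {v w : ι → β} (hv : hammingNorm v ≤ r) (hw : hammingNorm w ≤ r) (hvw : v ≠ w) :
    d - 2 * r ≤ hammingDist (t v) (t w) := by
  have := ht v w hvw
  have := hammingDist_triangle v 0 w
  rw [hammingDist_zero_right, hammingDist_zero_left] at this
  omega

theorem exists_packing_of_le_hammingDist_add {F : Type} [Fintype F] [DecidableEq F] [AddGroup F]
    {k m d r : ℕ} {t : (Fin k → F) → (Fin m → F)} (hr : 2 * r < d)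
    (ht : ∀ v w, v ≠ w → d ≤ hammingDist v w + hammingDist (t v) (t w)) :
    ∃ D : Finset (Fin m → F),
      ballCard (Fintype.card F) r m ≤ #D * ballCard (Fintype.card F) (d - 2 * r - 1) m ∧
      ballCard (Fintype.card F) r k + #D ≤ maxCodeCard F m (d - 2 * r) + 1 := by
  have he : 0 < d - 2 * r := by omega
  set B : Finset (Fin k → F) := {v | hammingNorm v ≤ r}
  have hinj : Set.InjOn t B := fun v hv w hw h => by
    by_contra hvw
    have := le_hammingDist_of_hammingNorm_le ht (mem_filter.1 hv).2 (mem_filter.1 hw).2 hvw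
    rw [h, hammingDist_self] at this
    omega
  have hTsep : (B.image t : Set (Fin m → F)).Pairwise (fun x y => d - 2 * r ≤ hammingDist x y) := by
    rw [coe_image]
    rintro _ ⟨v, hv, rfl⟩ _ ⟨w, hw, rfl⟩ hvw
    exact le_hammingDist_of_hammingNorm_le ht (mem_filter.1 hv).2 (mem_filter.1 hw).2
      (ne_of_apply_ne t hvw)
  have hfar : ∀ x ∈ B.image t, x ≠ t 0 → d - 2 * r + r ≤ hammingDist x (t 0) := by
    rintro _ hx hx0
    obtain ⟨v, hv, rfl⟩ := mem_image.1 hx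
    have hd := ht v 0 (ne_of_apply_ne t hx0)
    rw [hammingDist_zero_right] at hd
    have := (mem_filter.1 hv).2
    omega
  obtain ⟨D, hDsub, hD, hcover⟩ := exists_separated_subset_covering
    ({x | hammingDist x (t 0) ≤ r} : Finset (Fin m → F)) he
  have hDc : ∀ y ∈ D, hammingDist y (t 0) ≤ r := fun y hy => (mem_filter.1 (hDsub hy)).2
  refine ⟨D, ?_, ?_⟩
  · have := card_le_card_mul_ballCard (l := d - 2 * r - 1) fun x hx =>
      (hcover x hx).imp fun _ ⟨hy, hxy⟩ => ⟨hy, Nat.le_sub_one_of_lt hxy⟩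
    simpa [card_filter_hammingDist_le] using this
  · have hDne : D.Nonempty := (hcover (t 0) (by simp)).imp fun _ h => h.1
    have hmax := card_le_maxCodeCard (hDne.mono subset_union_right)
      (pairwise_erase_union hTsep hD hfar hDc)
    rw [card_erase_union he (mem_image_of_mem t (by simp [B])) hfar hDc,
      card_image_of_injOn hinj] at hmax
    have hB : #B = ballCard (Fintype.card F) r k := by
      simpa using card_filter_hammingNorm_le (ι := Fin k) (F := F) r
    have hB0 : 0 < #B := card_pos.2 ⟨0, by simp [B]⟩
    omega

lemma le_of_injective_pi {F : Type*} [Fintype F] [Nontrivial F] {k n : ℕ}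
    {φ : (Fin k → F) → (Fin n → F)} (hφ : Function.Injective φ) : k ≤ n := by
  have := Fintype.card_le_of_injective φ hφ
  simp only [Fintype.card_fun, Fintype.card_fin] at this
  exact (Nat.pow_le_pow_iff_right Fintype.one_lt_card).1 this

theorem boundB_general (q n k d r : ℕ)
    (F : Type) [Field F] [Fintype F] [DecidableEq F] (hF : Fintype.card F = q)
    (hd : 2 ≤ d) (hr : r ≤ min ((d - 1) / 2) k)
    (C : Finset (Fin n → F)) (hsys : IsSystematicCode k C)
    (hCdist : ∀ c ∈ C, ∀ c' ∈ C, c ≠ c' → d ≤ hammingDist c c') :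
    (ballCard q r k : ℚ) ≤ (maxCodeCard F (n - k) (d - 2 * r) : ℚ)
      - (ballCard q r (n - k) : ℚ) / (ballCard q (d - 2 * r - 1) (n - k) : ℚ) + 1 := by
  obtain ⟨φ, hφ, hhead, rfl⟩ := hsys
  obtain ⟨m, rfl⟩ := Nat.exists_eq_add_of_le (le_of_injective_pi hφ)
  have htail : ∀ v w, v ≠ w →
      d ≤ hammingDist v w + hammingDist (φ v ∘ Fin.natAdd k) (φ w ∘ Fin.natAdd k) := by
    intro v w hvw
    have hsplit := hammingDist_le_add_castAdd_natAdd (φ v) (φ w)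
    rw [show φ v ∘ Fin.castAdd m = v from funext fun j => hhead v _ j.2,
      show φ w ∘ Fin.castAdd m = w from funext fun j => hhead w _ j.2] at hsplit
    have := hCdist _ (mem_image_of_mem φ (mem_univ v)) _ (mem_image_of_mem φ (mem_univ w))
      (hφ.ne hvw)
    omega
  have h2r : 2 * r < d := by have := (le_min_iff.1 hr).1; omega
  obtain ⟨D, hcover, hpack⟩ := exists_packing_of_le_hammingDist_add h2r htail
  subst hF
  rw [Nat.add_sub_cancel_left]
  have hcover' : (ballCard (Fintype.card F) r m : ℚ) / ballCard (Fintype.card F) (d - 2 * r - 1) m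
      ≤ #D :=
    div_le_of_le_mul₀ (Nat.cast_nonneg _) (Nat.cast_nonneg _) (by exact_mod_cast hcover)
  have hpack' : (ballCard (Fintype.card F) r k : ℚ) + #D ≤ maxCodeCard F m (d - 2 * r) + 1 := by
    exact_mod_cast hpack
  linarith

/-- Bound ℬ. -/
theorem boundB (q n k d r : ℕ) (hq : IsPrimePow q)
    (F : Type) [Field F] [Fintype F] [DecidableEq F] (hF : Fintype.card F = q)
    (hd : 2 ≤ d) (hk : 1 ≤ k) (hr : r ≤ min ((d - 1) / 2) k)
    (C : Finset (Fin n → F)) (hsys : IsSystematicCode k C)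
    (hCdist : ∀ c ∈ C, ∀ c' ∈ C, c ≠ c' → d ≤ hammingDist c c') :
    (ballCard q r k : ℚ) ≤ (maxCodeCard F (n - k) (d - 2 * r) : ℚ)
      - (ballCard q r (n - k) : ℚ) / (ballCard q (d - 2 * r - 1) (n - k) : ℚ) + 1 :=
  boundB_general q n k d r F hF hd hr C hsys hCdist
end

section
/- Let q be a prime power, n ≥ d ≥ 1 and r ≥ d−1 be integers. Let D̄ ⊆ F_q^n be a code in which any two distinct words are at Hamming distance at least d, and suppose D̄ is maximal for this property, i.e. there is no vector y ∈ F_q^n \ D̄ with d(y,c) ≥ d for all c ∈ D̄. Then |D̄ ∩ B(r,n)| ≥ |B(r−d+1, n)| / |B(d−1, n)| (an inequality of rational numbers, equivalently |D̄ ∩ B(r,n)|·|B(d−1,n)| ≥ |B(r−d+1,n)|). -/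
open Finset

section Counting

def hammingSupport {ι β : Type*} [Fintype ι] [Zero β] [DecidableEq β] (x : ι → β) : Finset ι :=
  {i | x i ≠ 0}

variable {ι β : Type*} [Fintype ι] [DecidableEq ι] [Fintype β] [Zero β] [DecidableEq β]

theorem card_filter_hammingSupport_eq (s : Finset ι) :
    #{x : ι → β | hammingSupport x = s} = (Fintype.card β - 1) ^ #s := by
  have hpi : ({x : ι → β | hammingSupport x = s} : Finset _) =
      Fintype.piFinset fun i => if i ∈ s then univ.erase 0 else {0} := by
    ext x
    simp only [mem_filter, mem_univ, true_and, Fintype.mem_piFinset, Finset.ext_iff,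
      hammingSupport]
    refine forall_congr' fun i => ?_
    split_ifs with hi <;> simp [hi]
  simp only [hpi, Fintype.card_piFinset, apply_ite card, card_erase_of_mem (mem_univ _),
    card_univ, card_singleton]
  rw [prod_ite_mem, univ_inter, prod_const]

theorem card_hammingNorm_eq (j : ℕ) :
    #{x : ι → β | hammingNorm x = j} = (Fintype.card ι).choose j * (Fintype.card β - 1) ^ j := by
  rw [card_eq_sum_card_fiberwise (s := {x : ι → β | hammingNorm x = j})
    (f := hammingSupport) (t := powersetCard j univ)
    fun x hx => mem_powersetCard_univ.2 (mem_filter.1 hx).2]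
  have hfiber : ∀ s ∈ powersetCard j (univ : Finset ι),
      #{x ∈ ({x : ι → β | hammingNorm x = j} : Finset _) | hammingSupport x = s}
        = (Fintype.card β - 1) ^ j := by
    intro s hs
    rw [← (mem_powersetCard_univ.1 hs), ← card_filter_hammingSupport_eq, filter_filter]
    congr! 2 with x
    exact ⟨And.right, fun h => ⟨by rw [hammingNorm, ← h]; rfl, h⟩⟩
  rw [sum_congr rfl hfiber, sum_const, card_powersetCard, card_univ, smul_eq_mul]

theorem card_hammingNorm_le (l : ℕ) :
    #{x : ι → β | hammingNorm x ≤ l} = ballCard (Fintype.card β) l (Fintype.card ι) := by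
  rw [card_eq_sum_card_fiberwise (f := hammingNorm) (t := range (l + 1))
    fun x hx => mem_range.2 (Nat.lt_succ_of_le (mem_filter.1 hx).2), ballCard]
  refine sum_congr rfl fun j hj => ?_
  rw [filter_filter, ← card_hammingNorm_eq]
  congr! 2 with x
  exact ⟨And.right, fun h => ⟨h ▸ Nat.le_of_lt_succ (mem_range.1 hj), h⟩⟩

end Counting

theorem exists_hammingDist_le_of_maximal {ι : Type*} [Fintype ι] {β : ι → Type*}
    [∀ i, DecidableEq (β i)] {d : ℕ} {D : Finset (∀ i, β i)}
    (hmax : ¬ ∃ y, y ∉ D ∧ ∀ c ∈ D, d ≤ hammingDist y c) (x : ∀ i, β i) :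
    ∃ c ∈ D, hammingDist x c ≤ d - 1 := by
  by_cases hx : x ∈ D
  · exact ⟨x, hx, by simp⟩
  · obtain ⟨c, hc, hlt⟩ : ∃ c ∈ D, hammingDist x c < d := by
      by_contra! hfar
      exact hmax ⟨x, hx, hfar⟩
    exact ⟨c, hc, Nat.le_sub_one_of_lt hlt⟩

theorem card_hammingNorm_le_le_mul_of_covering {ι β : Type*} [Fintype ι] [DecidableEq ι]
    [Fintype β] [AddGroup β] [DecidableEq β] {D : Finset (ι → β)} {t : ℕ}
    (hcov : ∀ x, ∃ c ∈ D, hammingDist x c ≤ t) (s : ℕ) :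
    #{x : ι → β | hammingNorm x ≤ s} ≤
      #{c ∈ D | hammingNorm c ≤ s + t} * #{e : ι → β | hammingNorm e ≤ t} := by
  choose center hcenter hdist using hcov
  rw [← card_product]
  refine card_le_card_of_injOn (fun x => (center x, -center x + x)) (fun x hx => ?_) ?_
  · have hx : hammingNorm x ≤ s := (mem_filter.1 hx).2
    have hnorm : hammingNorm (center x) ≤ hammingDist (center x) x + hammingNorm x := by
      simpa only [hammingDist_zero_right] using hammingDist_triangle (center x) x 0
    have herr : hammingNorm (-center x + x) = hammingDist x (center x) := by
      rw [hammingDist_comm, hammingDist_eq_hammingNorm]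
    rw [hammingDist_comm] at hnorm
    simp only [coe_product, Set.mem_prod, coe_filter, Set.mem_ofPred_eq, mem_univ, true_and]
    exact ⟨⟨hcenter x, by linarith [hdist x]⟩, herr ▸ hdist x⟩
  · intro a _ b _ hab
    obtain ⟨hc, hsub⟩ := Prod.ext_iff.1 hab
    dsimp only at hc hsub
    rw [hc] at hsub
    exact add_left_cancel hsub

theorem card_low_weight_words_of_maximal_code_general (q n d r : ℕ)
    (F : Type) [Field F] [Fintype F] [DecidableEq F] (hF : Fintype.card F = q)
    (hr : d - 1 ≤ r)
    (D : Finset (Fin n → F))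
    (hmax : ¬ ∃ y : Fin n → F, y ∉ D ∧ ∀ c ∈ D, d ≤ hammingDist y c) :
    ballCard q (r - (d - 1)) n ≤
      (D.filter (fun x => hammingNorm x ≤ r)).card * ballCard q (d - 1) n := by
  have key := card_hammingNorm_le_le_mul_of_covering
    (exists_hammingDist_le_of_maximal hmax) (r - (d - 1))
  rwa [Nat.sub_add_cancel hr, card_hammingNorm_le, card_hammingNorm_le, Fintype.card_fin,
    hF] at key

/-- A maximal code `D̄` of minimum distance `≥ d` contains at least
`|B(r−d+1,n)| / |B(d−1,n)|` words of weight at most `r`. -/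
theorem card_low_weight_words_of_maximal_code (q n d r : ℕ) (hq : IsPrimePow q)
    (F : Type) [Field F] [Fintype F] [DecidableEq F] (hF : Fintype.card F = q)
    (hd1 : 1 ≤ d) (hdn : d ≤ n) (hr : d - 1 ≤ r)
    (D : Finset (Fin n → F))
    (hdist : ∀ c ∈ D, ∀ c' ∈ D, c ≠ c' → d ≤ hammingDist c c')
    (hmax : ¬ ∃ y : Fin n → F, y ∉ D ∧ ∀ c ∈ D, d ≤ hammingDist y c) :
    ballCard q (r - (d - 1)) n ≤
      (D.filter (fun x => hammingNorm x ≤ r)).card * ballCard q (d - 1) n :=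
  card_low_weight_words_of_maximal_code_general q n d r F hF hr D hmax
end
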